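/- arXiv:2604.01192 — 2 statements merged into one kernel-verified Lean document; each statement's English description precedes it below -/
import Mathlib

section
/- Let S be the closed horizontal strip {z ∈ ℂ : |Im z| ≤ 1/2} and let h₁(z) = exp(−(√(1+z²) + z)/4), where √ denotes the principal square root. Then |h₁(z)| ≤ 1 for every z ∈ S. -/
/-- Let `S` be the closed horizontal strip `{z ∈ ℂ : |Im z| ≤ 1/2}` and let
`h₁(z) = exp(−(√(1+z²) + z)/4)`, where `√` denotes the principal square root (given in Lean by
`w ^ (1/2 : ℂ)` via `Complex.cpow`).  Then `|h₁(z)| ≤ 1` for every `z ∈ S`. -/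
theorem abs_h1_le_one_on_strip (z : ℂ) (hz : |z.im| ≤ 1 / 2) :
    ‖Complex.exp (-(((1 + z ^ 2) ^ ((1 : ℂ) / 2)) + z) / 4)‖ ≤ 1 := by
  rw [Complex.norm_exp, Real.exp_le_one_iff]
  set w : ℂ := 1 + z ^ 2 with hw
  have hv2 : z.im ^ 2 ≤ 1 / 4 := by
    have h := abs_le.mp hz
    nlinarith [h.1, h.2]
  have hwre : 0 < w.re := by
    have : w.re = 1 + z.re ^ 2 - z.im ^ 2 := by
      simp [hw, pow_two, Complex.mul_re]
      ring
    rw [this]; nlinarith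
  have hw0 : w ≠ 0 := by
    intro h; rw [h] at hwre; simp at hwre
  set s : ℂ := w ^ ((1 : ℂ) / 2) with hs
  have hs2 : s ^ 2 = w := by
    have := Complex.cpow_nat_inv_pow w (n := 2) (by norm_num)
    rw [hs]
    norm_num at this ⊢
    exact this
  have hsre : 0 ≤ s.re := by
    rw [hs, Complex.cpow_def_of_ne_zero hw0]
    rw [Complex.exp_re]
    have him : (Complex.log w * (1 / 2)).im = w.arg / 2 := by
      simp [Complex.mul_im, Complex.log_im]
      ring
    rw [him]
    have harg : |w.arg| < Real.pi / 2 :=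
      Complex.abs_arg_lt_pi_div_two_iff.mpr (Or.inl hwre)
    have := abs_le.mp harg.le
    have hcos : 0 ≤ Real.cos (w.arg / 2) := by
      apply Real.cos_nonneg_of_mem_Icc
      constructor <;> [linarith [this.1]; linarith [this.2]]
    positivity
  -- (s.re)^2 ≥ (z.re)^2
  have hre2 : (s.re) ^ 2 = w.re + s.im ^ 2 := by
    have : (s ^ 2).re = s.re ^ 2 - s.im ^ 2 := by
      simp [pow_two, Complex.mul_re]
    rw [hs2] at this; linarith
  have hkey : -z.re ≤ s.re := by
    have hwre' : z.re ^ 2 ≤ w.re := by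
      have : w.re = 1 + z.re ^ 2 - z.im ^ 2 := by
        simp [hw, pow_two, Complex.mul_re]
        ring
      rw [this]; nlinarith
    nlinarith [sq_nonneg s.im, sq_nonneg (s.re + z.re), sq_nonneg (s.re - z.re)]
  have : (-(s + z) / 4).re = -(s.re + z.re) / 4 := by
    simp [Complex.div_re, Complex.add_re]
  rw [this]
  linarith
end

section
/- Fix θ ∈ [0, 1/2). There exists a constant C_θ ≥ 0 such that for all z in the strip {z ∈ ℂ : |Im z| ≤ 1/2} with |Re z| ≥ C_θ, one has Re(exp((1+z²)^θ)) ≥ (1/2)·exp(|Re z|^{2θ}/2), where (1+z²)^θ is defined via the principal branch. -/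
open Real

set_option maxHeartbeats 1000000

/-- Fix `θ ∈ [0, 1/2)`.  There exists a constant `C_θ ≥ 0` such that for all
`z` in the strip `{z ∈ ℂ : |Im z| ≤ 1/2}` with `|Re z| ≥ C_θ`, one has
`Re(exp((1+z²)^θ)) ≥ (1/2)·exp(|Re z|^{2θ}/2)`, where `(1+z²)^θ` is defined via the principal
branch (`Complex.cpow`). -/
theorem re_exp_cpow_lower_bound (θ : ℝ) (hθ0 : 0 ≤ θ) (hθ : θ < 1 / 2) :
    ∃ C : ℝ, 0 ≤ C ∧ ∀ z : ℂ, |z.im| ≤ 1 / 2 → C ≤ |z.re| →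
      (1 / 2) * Real.exp (|z.re| ^ (2 * θ) / 2) ≤ (Complex.exp ((1 + z ^ 2) ^ (θ : ℂ))).re := by
  refine ⟨1, zero_le_one, fun z hv hu => ?_⟩
  set u := z.re with hu_def
  set v := z.im with hv_def
  have hu1 : (1:ℝ) ≤ |u| := hu
  have huabs : 0 < |u| := lt_of_lt_of_le one_pos hu1
  have hu2 : 1 ≤ u ^ 2 := by nlinarith [sq_abs u]
  have huu : |u| ≤ u ^ 2 := by nlinarith [sq_abs u]
  have hv2 : v ^ 2 ≤ 1 / 4 := by nlinarith [sq_abs v, abs_nonneg v]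
  set b : ℂ := 1 + z ^ 2 with hb
  have hbre : b.re = 1 + (u ^ 2 - v ^ 2) := by
    simp [hb, pow_two, Complex.add_re, Complex.mul_re]; rfl
  have hbim : b.im = 2 * (u * v) := by
    simp [hb, pow_two, Complex.add_im, Complex.mul_im]; ring
  have hbre_pos : 0 < b.re := by rw [hbre]; nlinarith
  have hbre_ge : u ^ 2 ≤ b.re := by rw [hbre]; nlinarith
  have hb0 : b ≠ 0 := fun h => by simp [h] at hbre_pos
  set R := ‖b‖ with hR_def
  have hR_pos : 0 < R := norm_pos_iff.mpr hb0
  have hR_ge : u ^ 2 ≤ R := le_trans hbre_ge (Complex.re_le_norm b)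
  have him_le : |b.im| ≤ |u| := by
    rw [hbim, abs_mul, abs_mul, abs_two]
    nlinarith [abs_nonneg u, abs_nonneg v]
  have hR_le : R ≤ 3 * u ^ 2 := by
    refine le_trans (Complex.norm_le_abs_re_add_abs_im b) ?_
    have h1 : |b.re| ≤ 1 + u ^ 2 := by
      rw [abs_of_pos hbre_pos, hbre]; nlinarith
    nlinarith [him_le]
  set φ := Complex.arg b with hφ_def
  have hφ_lt : |φ| < π / 2 :=
    Complex.abs_arg_lt_pi_div_two_iff.2 (Or.inl hbre_pos)
  have htan : Real.tan φ = b.im / b.re := Complex.tan_arg b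
  have htanabs : |Real.tan φ| ≤ 1 / |u| := by
    rw [htan, abs_div, abs_of_pos hbre_pos]
    rw [div_le_div_iff₀ hbre_pos huabs]
    calc |b.im| * |u| ≤ |u| * |u| := by nlinarith [abs_nonneg u]
      _ = u ^ 2 := by rw [← sq_abs]; ring
      _ ≤ 1 * b.re := by linarith
  have hφ_le : |φ| ≤ 1 / |u| := by
    rcases le_or_gt 0 φ with h | h
    · have := Real.le_tan h (lt_of_le_of_lt (le_abs_self φ) hφ_lt)
      calc |φ| = φ := abs_of_nonneg h
        _ ≤ Real.tan φ := this
        _ ≤ |Real.tan φ| := le_abs_self _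
        _ ≤ 1 / |u| := htanabs
    · have hneg : -φ < π / 2 := lt_of_le_of_lt (neg_le_abs φ) hφ_lt
      have := Real.le_tan (le_of_lt (neg_pos.2 h)) hneg
      rw [Real.tan_neg] at this
      calc |φ| = -φ := abs_of_neg h
        _ ≤ -Real.tan φ := this
        _ ≤ |Real.tan φ| := neg_le_abs _
        _ ≤ 1 / |u| := htanabs
  -- the principal power
  have hw : b ^ (θ : ℂ) = Complex.exp (Complex.log b * (θ : ℂ)) :=
    Complex.cpow_def_of_ne_zero hb0 _
  have hcre : (Complex.log b * (θ : ℂ)).re = Real.log R * θ := by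
    simp [Complex.mul_re, Complex.log_re, Complex.log_im]; left; rfl
  have hcim : (Complex.log b * (θ : ℂ)).im = φ * θ := by
    simp [Complex.mul_im, Complex.log_re, Complex.log_im]; left; rfl
  have hexplog : Real.exp (Real.log R * θ) = R ^ θ :=
    (Real.rpow_def_of_pos hR_pos θ).symm
  have hwre : (b ^ (θ : ℂ)).re = R ^ θ * Real.cos (φ * θ) := by
    rw [hw, Complex.exp_re, hcre, hcim, hexplog]
  have hwim : (b ^ (θ : ℂ)).im = R ^ θ * Real.sin (φ * θ) := by
    rw [hw, Complex.exp_im, hcre, hcim, hexplog]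
  -- bound on the small angle φ*θ
  have hangle : |φ * θ| ≤ 1 := by
    rw [abs_mul, abs_of_nonneg hθ0]
    have : |φ| * θ ≤ (π / 2) * (1 / 2) :=
      mul_le_mul (le_of_lt hφ_lt) (le_of_lt hθ) hθ0 (by positivity)
    linarith [Real.pi_le_four]
  have hcos1 : (1:ℝ) / 2 ≤ Real.cos (φ * θ) := by
    have h1 : (φ * θ) ^ 2 ≤ 1 := by nlinarith [abs_nonneg (φ * θ), sq_abs (φ * θ)]
    nlinarith [Real.one_sub_sq_div_two_le_cos (x := φ * θ)]
  -- |u| ^ (2θ) = (u^2) ^ θ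
  have hkey : |u| ^ (2 * θ) = (u ^ 2) ^ θ := by
    rw [Real.rpow_mul (abs_nonneg u), Real.rpow_two, sq_abs]
  have hRθ_ge : |u| ^ (2 * θ) ≤ R ^ θ := by
    rw [hkey]; exact Real.rpow_le_rpow (sq_nonneg u) hR_ge hθ0
  have hRθ_nonneg : (0:ℝ) ≤ R ^ θ := Real.rpow_nonneg (le_of_lt hR_pos) θ
  -- lower bound for the real part of w
  have hre_ge : |u| ^ (2 * θ) / 2 ≤ (b ^ (θ : ℂ)).re := by
    rw [hwre]
    have : |u| ^ (2 * θ) * (1 / 2) ≤ R ^ θ * Real.cos (φ * θ) :=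
      mul_le_mul hRθ_ge hcos1 (by norm_num) hRθ_nonneg
    linarith
  -- upper bound on |Im w|
  have hRθ_le : R ^ θ ≤ Real.sqrt 3 * |u| := by
    calc R ^ θ ≤ (3 * u ^ 2) ^ θ :=
          Real.rpow_le_rpow (le_of_lt hR_pos) hR_le hθ0
      _ = 3 ^ θ * (u ^ 2) ^ θ := Real.mul_rpow (by norm_num) (sq_nonneg u)
      _ ≤ Real.sqrt 3 * |u| := by
          have h3 : (3:ℝ) ^ θ ≤ Real.sqrt 3 := by
            rw [Real.sqrt_eq_rpow]
            exact Real.rpow_le_rpow_of_exponent_le (by norm_num) (by linarith)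
          have h4 : (u ^ 2) ^ θ ≤ |u| := by
            rw [← hkey]
            calc |u| ^ (2 * θ) ≤ |u| ^ (1:ℝ) :=
                  Real.rpow_le_rpow_of_exponent_le hu1 (by linarith)
              _ = |u| := Real.rpow_one _
          exact mul_le_mul h3 h4 (Real.rpow_nonneg (sq_nonneg u) θ) (Real.sqrt_nonneg 3)
  have him_w : |(b ^ (θ : ℂ)).im| ≤ Real.sqrt 3 / 2 := by
    rw [hwim, abs_mul, abs_of_nonneg hRθ_nonneg]
    have hs : |Real.sin (φ * θ)| ≤ θ / |u| := by
      refine le_trans (Real.abs_sin_le_abs) ?_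
      rw [abs_mul, abs_of_nonneg hθ0, div_eq_mul_inv, mul_comm θ]
      exact mul_le_mul_of_nonneg_right (by simpa [one_div] using hφ_le) hθ0
    calc R ^ θ * |Real.sin (φ * θ)| ≤ (Real.sqrt 3 * |u|) * (θ / |u|) :=
          mul_le_mul hRθ_le hs (abs_nonneg _) (by positivity)
      _ = Real.sqrt 3 * θ := by field_simp
      _ ≤ Real.sqrt 3 / 2 := by nlinarith [Real.sqrt_nonneg 3]
  have hcos2 : (1:ℝ) / 2 ≤ Real.cos (b ^ (θ : ℂ)).im := by
    have h1 : ((b ^ (θ : ℂ)).im) ^ 2 ≤ 3 / 4 := by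
      have h3 : (Real.sqrt 3 / 2) ^ 2 = 3 / 4 := by
        rw [div_pow, Real.sq_sqrt (by norm_num : (0:ℝ) ≤ 3)]; norm_num
      nlinarith [abs_nonneg ((b ^ (θ : ℂ)).im), sq_abs ((b ^ (θ : ℂ)).im),
        Real.sqrt_nonneg 3]
    nlinarith [Real.one_sub_sq_div_two_le_cos (x := (b ^ (θ : ℂ)).im)]
  -- final assembly
  rw [Complex.exp_re]
  calc (1:ℝ) / 2 * Real.exp (|u| ^ (2 * θ) / 2)
      = Real.exp (|u| ^ (2 * θ) / 2) * (1 / 2) := by ring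
    _ ≤ Real.exp ((b ^ (θ : ℂ)).re) * Real.cos ((b ^ (θ : ℂ)).im) :=
        mul_le_mul (Real.exp_le_exp.2 hre_ge) hcos2 (by norm_num)
          (le_of_lt (Real.exp_pos _))
end
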